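/- For the dicyclic group Dic_{4n} of order 4n with n odd, D(Dic_{4n}) = σ(2n) + 4n; consequently Dic_{4n} is Leinster if and only if σ(2n) = 4n, i.e., 2n is a perfect number. In particular Dic_{12} (n = 3) is Leinster. -/

import Mathlib

/-!
In `QuaternionGroup n` (that is, `Dic_{4n}`, with `a i = a^i` and `xa i = x a^i`), conjugation
acts on the cyclic subgroup `⟨a⟩` of order `2n` by `a^i ↦ a^{±i}`, so every subgroup of `⟨a⟩` is
normal. A normal subgroup containing some `x a^i` contains its square `a^n` and, conjugating by `a`,
also `a^2`; for odd `n` these generate `⟨a⟩`, and the subgroup is the whole group. Subgroups of a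
finite cyclic group are determined by their orders, one for each divisor, so
`D = σ(2n) + 4n`.
-/

/-- Sum of the orders of all normal subgroups of `G`. -/
noncomputable def D (G : Type*) [Group G] : ℕ :=
  ∑ᶠ N ∈ {N : Subgroup G | N.Normal}, Nat.card N

open Subgroup

namespace IsCyclic

variable {G : Type*} [Group G] [Finite G] [IsCyclic G]

/-- A subgroup of order `d` lies among the solutions of `x ^ d = 1`, and a cyclic group has at
most `d` of them. -/
theorem mem_subgroup_iff_pow_card_eq_one (H : Subgroup G) (x : G) :
    x ∈ H ↔ x ^ Nat.card H = 1 := by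
  classical
  have := Fintype.ofFinite G
  have hsub : Finset.univ.filter (· ∈ H) ⊆ Finset.univ.filter (· ^ Nat.card H = 1) := by
    intro y hy
    simp only [Finset.mem_filter, Finset.mem_univ, true_and] at hy ⊢
    exact orderOf_dvd_iff_pow_eq_one.mp (H.orderOf_dvd_natCard hy)
  have heq := Finset.eq_of_subset_of_card_le hsub <| by
    rw [← Fintype.card_subtype (· ∈ H), ← Nat.card_eq_fintype_card]
    exact card_pow_eq_one_le (α := G) (Nat.card_pos (α := H))
  simpa using Finset.ext_iff.mp heq x

theorem subgroup_eq_of_card_eq {H K : Subgroup G} (h : Nat.card H = Nat.card K) : H = K := by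
  ext x
  rw [mem_subgroup_iff_pow_card_eq_one, mem_subgroup_iff_pow_card_eq_one, h]

theorem exists_subgroup_card_eq {d : ℕ} (hd : d ∣ Nat.card G) :
    ∃ H : Subgroup G, Nat.card H = d := by
  obtain ⟨g, hg⟩ := exists_ofOrder_eq_natCard (α := G)
  refine ⟨zpowers (g ^ (Nat.card G / d)), ?_⟩
  rw [Nat.card_zpowers, orderOf_pow, hg, Nat.gcd_eq_right (Nat.div_dvd_of_dvd hd),
    Nat.div_div_self hd Nat.card_pos.ne']

theorem finsum_card_subgroup :
    ∑ᶠ H : Subgroup G, Nat.card H = ArithmeticFunction.sigma 1 (Nat.card G) := by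
  have := Fintype.ofFinite (Subgroup G)
  rw [finsum_eq_sum_of_fintype, ArithmeticFunction.sigma_one_apply]
  refine Finset.sum_nbij (Nat.card ·) (fun H _ => ?_) (fun H _ K _ h => ?_)
    (fun d hd => ?_) (fun _ _ => rfl)
  · exact Nat.mem_divisors.mpr ⟨H.card_subgroup_dvd_card, Nat.card_pos.ne'⟩
  · exact subgroup_eq_of_card_eq h
  · obtain ⟨H, hH⟩ := exists_subgroup_card_eq (Nat.mem_divisors.mp hd).1
    exact ⟨H, Finset.mem_coe.mpr (Finset.mem_univ H), hH⟩

end IsCyclic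

theorem Subgroup.finsum_card_of_le {G : Type*} [Group G] (A : Subgroup G) :
    ∑ᶠ N ∈ {N : Subgroup G | N ≤ A}, Nat.card N = ∑ᶠ K : Subgroup A, Nat.card K := by
  have hrange : {N : Subgroup G | N ≤ A} = Set.range (fun K : Subgroup A => K.map A.subtype) := by
    ext N
    refine ⟨fun hN => ⟨N.subgroupOf A, ?_⟩, ?_⟩
    · exact (subgroupOf_map_subtype N A).trans (inf_eq_left.mpr hN)
    · rintro ⟨K, rfl⟩
      exact map_subtype_le K
  rw [hrange, finsum_mem_range (map_injective A.subtype_injective)]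
  exact finsum_congr fun K => Nat.card_congr (K.equivMapOfInjective _ A.subtype_injective).symm

theorem D_eq_card_add_sigma_of_normal_iff {G : Type*} [Group G] [Finite G] (A : Subgroup G)
    [IsCyclic A] (hA : A ≠ ⊤) (hnormal : ∀ N : Subgroup G, N.Normal ↔ N = ⊤ ∨ N ≤ A) :
    D G = Nat.card G + ArithmeticFunction.sigma 1 (Nat.card A) := by
  have hset : {N : Subgroup G | N.Normal} = insert ⊤ {N | N ≤ A} := by
    ext N
    simp only [Set.mem_ofPred_eq, Set.mem_insert_iff, hnormal]
  have htop : (⊤ : Subgroup G) ∉ {N : Subgroup G | N ≤ A} := fun h => hA (top_le_iff.mp h)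
  rw [D, hset, finsum_mem_insert _ htop (Set.toFinite _), Subgroup.finsum_card_of_le,
    IsCyclic.finsum_card_subgroup, card_top]

namespace QuaternionGroup

variable {n : ℕ}

theorem natCast_add_self : (n : ZMod (2 * n)) + n = 0 := by
  rw [← Nat.cast_add, ← two_mul, ZMod.natCast_self]

theorem inv_a (i : ZMod (2 * n)) : (a i : QuaternionGroup n)⁻¹ = a (-i) := by
  rw [inv_eq_iff_mul_eq_one, a_mul_a, add_neg_cancel, a_zero]

theorem inv_xa (i : ZMod (2 * n)) :
    (xa i : QuaternionGroup n)⁻¹ = xa ((n : ZMod (2 * n)) + i) := by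
  rw [inv_eq_iff_mul_eq_one, xa_mul_xa, ← add_assoc, add_sub_cancel_right, natCast_add_self,
    a_zero]

theorem a_pow (i : ZMod (2 * n)) (k : ℕ) :
    (a i : QuaternionGroup n) ^ k = a ((k : ZMod (2 * n)) * i) := by
  induction k with
  | zero => rw [pow_zero, Nat.cast_zero, zero_mul, a_zero]
  | succ k ih => rw [pow_succ, ih, a_mul_a, Nat.cast_succ, add_one_mul]

theorem conj_a (g : QuaternionGroup n) (i : ZMod (2 * n)) :
    g * a i * g⁻¹ = a i ∨ g * a i * g⁻¹ = a (-i) := by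
  cases g with
  | a j => exact .inl (by rw [a_mul_a, inv_a, a_mul_a, add_neg_cancel_comm])
  | xa j =>
    refine .inr ?_
    rw [xa_mul_a, inv_xa, xa_mul_xa]
    congr 1
    linear_combination (natCast_add_self (n := n))

theorem mem_zpowers_a_one_iff [NeZero n] {g : QuaternionGroup n} :
    g ∈ zpowers (a 1) ↔ ∃ i, g = a i := by
  classical
  simp only [mem_zpowers_iff_mem_range_orderOf, orderOf_a_one, Finset.mem_image,
    Finset.mem_range, a_one_pow]
  constructor
  · rintro ⟨k, -, rfl⟩
    exact ⟨k, rfl⟩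
  · rintro ⟨i, rfl⟩
    exact ⟨i.val, i.val_lt, by rw [ZMod.natCast_zmod_val]⟩

theorem normal_of_le_zpowers_a_one [NeZero n] {N : Subgroup (QuaternionGroup n)}
    (hN : N ≤ zpowers (a 1)) : N.Normal where
  conj_mem x hx g := by
    obtain ⟨i, rfl⟩ := mem_zpowers_a_one_iff.mp (hN hx)
    rcases conj_a g i with h | h <;> rw [h]
    · exact hx
    · exact inv_a i ▸ N.inv_mem hx

theorem eq_top_of_normal_of_xa_mem (hodd : Odd n) {N : Subgroup (QuaternionGroup n)}
    (hN : N.Normal) {i : ZMod (2 * n)} (hi : xa i ∈ N) : N = ⊤ := by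
  have : NeZero n := ⟨hodd.pos.ne'⟩
  have ha_n : a n ∈ N := xa_sq i ▸ N.pow_mem hi 2
  have ha_neg_two : a (-2) ∈ N := by
    have hconj := hN.conj_mem _ hi (a 1)
    rw [a_mul_xa, inv_a, xa_mul_a] at hconj
    have := N.mul_mem (N.inv_mem hi) hconj
    rwa [inv_xa, xa_mul_xa, show (n + (i - 1 + -1) - (n + i) : ZMod (2 * n)) = -2 by ring]
      at this
  have ha_one : a 1 ∈ N := by
    obtain ⟨k, hk⟩ := hodd
    have := N.mul_mem ha_n (N.pow_mem ha_neg_two k)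
    rwa [a_pow, a_mul_a, show (n + k * -2 : ZMod (2 * n)) = 1 by rw [hk]; push_cast; ring]
      at this
  have ha : ∀ j, a j ∈ N := fun j => zpowers_le.mpr ha_one (mem_zpowers_a_one_iff.mpr ⟨j, rfl⟩)
  refine eq_top_iff.mpr fun g _ => ?_
  cases g with
  | a j => exact ha j
  | xa j => simpa only [xa_mul_a, add_sub_cancel] using N.mul_mem hi (ha (j - i))

theorem normal_iff (hodd : Odd n) (N : Subgroup (QuaternionGroup n)) :
    N.Normal ↔ N = ⊤ ∨ N ≤ zpowers (a 1) := by
  have : NeZero n := ⟨hodd.pos.ne'⟩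
  refine ⟨fun hN => or_iff_not_imp_right.mpr fun hle => ?_, ?_⟩
  · obtain ⟨g, hg, hg_not⟩ := SetLike.not_le_iff_exists.mp hle
    cases g with
    | a j => exact absurd (mem_zpowers_a_one_iff.mpr ⟨j, rfl⟩) hg_not
    | xa j => exact eq_top_of_normal_of_xa_mem hodd hN hg
  · rintro (rfl | hle)
    · infer_instance
    · exact normal_of_le_zpowers_a_one hle

theorem D_eq_sigma_add_of_odd (hodd : Odd n) :
    D (QuaternionGroup n) = ArithmeticFunction.sigma 1 (2 * n) + 4 * n := by
  have : NeZero n := ⟨hodd.pos.ne'⟩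
  have hA : zpowers (a 1 : QuaternionGroup n) ≠ ⊤ := fun h => by
    obtain ⟨i, hi⟩ := mem_zpowers_a_one_iff.mp (h ▸ mem_top (xa 0))
    cases hi
  rw [D_eq_card_add_sigma_of_normal_iff _ hA (normal_iff hodd), Nat.card_zpowers, orderOf_a_one,
    Nat.card_eq_fintype_card, card, add_comm]

end QuaternionGroup

theorem D_dicyclic_odd_general (n : ℕ) (hodd : Odd n) :
    D (QuaternionGroup n) = ArithmeticFunction.sigma 1 (2 * n) + 4 * n ∧
    (D (QuaternionGroup n) = 2 * (4 * n) ↔ ArithmeticFunction.sigma 1 (2 * n) = 4 * n) ∧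
    D (QuaternionGroup 3) = 2 * Nat.card (QuaternionGroup 3) := by
  have hD := QuaternionGroup.D_eq_sigma_add_of_odd hodd
  have hσ : ArithmeticFunction.sigma 1 (2 * 3) = 12 := by
    rw [ArithmeticFunction.sigma_one_apply]
    decide
  refine ⟨hD, by rw [hD]; omega, ?_⟩
  rw [QuaternionGroup.D_eq_sigma_add_of_odd (by decide), hσ, Nat.card_eq_fintype_card,
    QuaternionGroup.card]

theorem D_dicyclic_odd (n : ℕ) (hn : 0 < n) (hodd : Odd n) :
    D (QuaternionGroup n) = ArithmeticFunction.sigma 1 (2 * n) + 4 * n ∧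
    (D (QuaternionGroup n) = 2 * (4 * n) ↔ ArithmeticFunction.sigma 1 (2 * n) = 4 * n) ∧
    D (QuaternionGroup 3) = 2 * Nat.card (QuaternionGroup 3) :=
  D_dicyclic_odd_general n hodd
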